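/- arXiv:2602.11640 — 7 statements merged into one kernel-verified Lean document; each statement's English description precedes it below -/
import Mathlib

section
/- Global explicit bounds for the discrete HJB (Φ-) scheme. Let h : {1,…,N_t}×𝔾 → ℝ^d, let Γ : {1,…,N_t}×𝔾 → ℝ satisfy 0 ≤ Γ_{n,i} ≤ C₀, and assume the CFL condition Σ_{ℓ=1}^d |h^ℓ_{n,i}|·(Δt/Δx) + 2dν·Δt/(Δx)² ≤ 1 for all (n,i). Let g : 𝔾 → ℝ and let Φ : {0,…,N_t}×𝔾 → ℝ satisfy Φ_{N_t,i} = exp(−g_i/(2ν)) for all i, and for every n = 1,…,N_t and i ∈ 𝔾, (1 + (Δt/(2ν))Γ_{n,i})Φ_{n−1,i} = (1 − Σ_ℓ|h^ℓ_{n,i}|·Δt/Δx − 2dν·Δt/(Δx)²)Φ_{n,i} + Σ_ℓ (h^{ℓ,+}_{n,i}·Δt/Δx + ν·Δt/(Δx)²)Φ_{n,i[ℓ+]} + Σ_ℓ (h^{ℓ,−}_{n,i}·Δt/Δx + ν·Δt/(Δx)²)Φ_{n,i[ℓ−]}. Then, with T = N_tΔt, for all n ∈ {0,…,N_t} and i ∈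 𝔾: exp(−( (max_j g_j) + TC₀ )/(2ν)) ≤ Φ_{n,i} ≤ exp(−(min_j g_j)/(2ν)). -/
open Finset

/-- Shift of the `ℓ`-th coordinate of a periodic grid index by `z` (mod `N_x`). -/
def shiftIdx {d Nx : ℕ} (i : Fin d → ZMod Nx) (ℓ : Fin d) (z : ZMod Nx) : Fin d → ZMod Nx :=
  Function.update i ℓ (i ℓ + z)

/-- Global explicit bounds for the discrete HJB (Φ-) scheme:
`exp(−((max_j g_j) + T·C₀)/(2ν)) ≤ Φ_{n,i} ≤ exp(−(min_j g_j)/(2ν))`. -/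
theorem discrete_hjb_global_bounds
    (d Nx Nt : ℕ) (hd : 0 < d) (hNx : 0 < Nx) (hNt : 0 < Nt)
    (Δt Δx ν C₀ : ℝ) (hΔt : 0 < Δt) (hΔx : 0 < Δx) (hν : 0 < ν) (hC₀ : 0 ≤ C₀)
    (h : ℕ → (Fin d → ZMod Nx) → Fin d → ℝ)
    (Γ : ℕ → (Fin d → ZMod Nx) → ℝ)
    (hΓ : ∀ n, 1 ≤ n → n ≤ Nt → ∀ i, 0 ≤ Γ n i ∧ Γ n i ≤ C₀)
    (hCFL : ∀ n, 1 ≤ n → n ≤ Nt → ∀ i,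
      (∑ ℓ, |h n i ℓ|) * (Δt / Δx) + 2 * d * ν * Δt / Δx ^ 2 ≤ 1)
    (g : (Fin d → ZMod Nx) → ℝ)
    (Φ : ℕ → (Fin d → ZMod Nx) → ℝ)
    (hterm : ∀ i, Φ Nt i = Real.exp (-g i / (2 * ν)))
    (heq : ∀ n, 1 ≤ n → n ≤ Nt → ∀ i,
      (1 + Δt / (2 * ν) * Γ n i) * Φ (n - 1) i =
        (1 - (∑ ℓ, |h n i ℓ|) * (Δt / Δx) - 2 * d * ν * Δt / Δx ^ 2) * Φ n i
        + ∑ ℓ, (max (h n i ℓ) 0 * (Δt / Δx) + ν * Δt / Δx ^ 2) * Φ n (shiftIdx i ℓ 1)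
        + ∑ ℓ, (max (-h n i ℓ) 0 * (Δt / Δx) + ν * Δt / Δx ^ 2) * Φ n (shiftIdx i ℓ (-1))) :
    ∀ n, n ≤ Nt → ∀ i,
      Real.exp (-((⨆ j, g j) + (Nt * Δt) * C₀) / (2 * ν)) ≤ Φ n i ∧
      Φ n i ≤ Real.exp (-(⨅ j, g j) / (2 * ν)) := by
  haveI : NeZero Nx := ⟨hNx.ne'⟩
  have h2ν : (0:ℝ) < 2 * ν := by linarith
  set M : ℝ := ⨆ j, g j with hM
  set m : ℝ := ⨅ j, g j with hm
  have hgM : ∀ j, g j ≤ M := fun j => le_ciSup (Set.Finite.bddAbove (Set.finite_range g)) j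
  have hgm : ∀ j, m ≤ g j := fun j => ciInf_le (Set.Finite.bddBelow (Set.finite_range g)) j
  set A : ℝ := Real.exp (-M / (2 * ν)) with hA
  set B : ℝ := Real.exp (-m / (2 * ν)) with hB
  set c : ℝ := Δt * C₀ / (2 * ν) with hc
  have hc0 : 0 ≤ c := by positivity
  have key : ∀ k n, n + k = Nt → ∀ i, A / (1 + c) ^ k ≤ Φ n i ∧ Φ n i ≤ B := by
    intro k
    induction k with
    | zero =>
      intro n hn i
      have hn' : n = Nt := by omega
      subst hn'
      rw [hterm i]
      constructor
      · simp only [pow_zero, div_one]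
        apply Real.exp_le_exp.mpr
        gcongr
        · exact hgM i
      · apply Real.exp_le_exp.mpr
        gcongr
        exact hgm i
    | succ k ih =>
      intro n hn i
      have ih' := ih (n+1) (by omega)
      have h2 : n + 1 ≤ Nt := by omega
      have hΓn := hΓ (n+1) (by omega) h2 i
      have hcfl := hCFL (n+1) (by omega) h2 i
      have heqn := heq (n+1) (by omega) h2 i
      simp only [Nat.add_sub_cancel] at heqn
      set L : ℝ := A / (1 + c) ^ k with hL
      have hL0 : 0 < L := by positivity
      set a : ℝ := Δt / (2 * ν) * Γ (n+1) i with ha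
      have ha0 : 0 ≤ a := mul_nonneg (by positivity) hΓn.1
      have hac : a ≤ c := by
        rw [ha, hc]
        calc Δt / (2*ν) * Γ (n+1) i ≤ Δt / (2*ν) * C₀ :=
              mul_le_mul_of_nonneg_left hΓn.2 (by positivity)
        _ = Δt * C₀ / (2*ν) := by ring
      set q : ℝ := ν * Δt / Δx ^ 2 with hq
      have hq0 : 0 ≤ q := by positivity
      set S : ℝ := ∑ ℓ, |h (n+1) i ℓ| with hS
      have hc₀ : 0 ≤ 1 - S * (Δt / Δx) - 2 * d * ν * Δt / Δx ^ 2 := by linarith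
      have hsum : (1 - S * (Δt / Δx) - 2 * d * ν * Δt / Δx ^ 2)
          + (∑ ℓ, (max (h (n+1) i ℓ) 0 * (Δt / Δx) + q))
          + (∑ ℓ, (max (-h (n+1) i ℓ) 0 * (Δt / Δx) + q)) = 1 := by
        have hcomb : (∑ ℓ, (max (h (n+1) i ℓ) 0 * (Δt / Δx) + q))
            + (∑ ℓ, (max (-h (n+1) i ℓ) 0 * (Δt / Δx) + q))
            = S * (Δt/Δx) + d * (2 * q) := by
          rw [← Finset.sum_add_distrib]
          have hpt : ∀ ℓ ∈ Finset.univ,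
              (max (h (n+1) i ℓ) 0 * (Δt / Δx) + q)
              + (max (-h (n+1) i ℓ) 0 * (Δt / Δx) + q)
              = |h (n+1) i ℓ| * (Δt/Δx) + 2 * q := by
            intro ℓ _
            rw [← max_zero_add_max_neg_zero_eq_abs_self (h (n+1) i ℓ)]
            ring
          rw [Finset.sum_congr rfl hpt, Finset.sum_add_distrib, Finset.sum_const,
            ← Finset.sum_mul, ← hS]
          simp [Finset.card_univ, nsmul_eq_mul]
        have hK : 2 * (d:ℝ) * ν * Δt / Δx ^ 2 = (d:ℝ) * (2 * q) := by rw [hq]; ring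
        linarith [hcomb]
      -- lower bound on (1+a) * Φ n i
      have t1 : L * (1 - S * (Δt / Δx) - 2 * d * ν * Δt / Δx ^ 2)
          ≤ (1 - S * (Δt / Δx) - 2 * d * ν * Δt / Δx ^ 2) * Φ (n+1) i := by
        rw [mul_comm]; exact mul_le_mul_of_nonneg_left (ih' i).1 hc₀
      have t2 : ∑ ℓ, L * (max (h (n+1) i ℓ) 0 * (Δt / Δx) + q)
          ≤ ∑ ℓ, (max (h (n+1) i ℓ) 0 * (Δt / Δx) + q) * Φ (n+1) (shiftIdx i ℓ 1) := by
        apply Finset.sum_le_sum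
        intro ℓ _
        rw [mul_comm]
        exact mul_le_mul_of_nonneg_left (ih' _).1
          (add_nonneg (mul_nonneg (le_max_right _ _) (by positivity)) hq0)
      have t3 : ∑ ℓ, L * (max (-h (n+1) i ℓ) 0 * (Δt / Δx) + q)
          ≤ ∑ ℓ, (max (-h (n+1) i ℓ) 0 * (Δt / Δx) + q) * Φ (n+1) (shiftIdx i ℓ (-1)) := by
        apply Finset.sum_le_sum
        intro ℓ _
        rw [mul_comm]
        exact mul_le_mul_of_nonneg_left (ih' _).1
          (add_nonneg (mul_nonneg (le_max_right _ _) (by positivity)) hq0)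
      have u1 : (1 - S * (Δt / Δx) - 2 * d * ν * Δt / Δx ^ 2) * Φ (n+1) i
          ≤ B * (1 - S * (Δt / Δx) - 2 * d * ν * Δt / Δx ^ 2) := by
        rw [mul_comm B]; exact mul_le_mul_of_nonneg_left (ih' i).2 hc₀
      have u2 : ∑ ℓ, (max (h (n+1) i ℓ) 0 * (Δt / Δx) + q) * Φ (n+1) (shiftIdx i ℓ 1)
          ≤ ∑ ℓ, B * (max (h (n+1) i ℓ) 0 * (Δt / Δx) + q) := by
        apply Finset.sum_le_sum
        intro ℓ _
        rw [mul_comm B]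
        exact mul_le_mul_of_nonneg_left (ih' _).2
          (add_nonneg (mul_nonneg (le_max_right _ _) (by positivity)) hq0)
      have u3 : ∑ ℓ, (max (-h (n+1) i ℓ) 0 * (Δt / Δx) + q) * Φ (n+1) (shiftIdx i ℓ (-1))
          ≤ ∑ ℓ, B * (max (-h (n+1) i ℓ) 0 * (Δt / Δx) + q) := by
        apply Finset.sum_le_sum
        intro ℓ _
        rw [mul_comm B]
        exact mul_le_mul_of_nonneg_left (ih' _).2
          (add_nonneg (mul_nonneg (le_max_right _ _) (by positivity)) hq0)
      have hlow : L ≤ (1 + a) * Φ n i := by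
        rw [heqn]
        calc L = L * ((1 - S * (Δt / Δx) - 2 * d * ν * Δt / Δx ^ 2)
              + (∑ ℓ, (max (h (n+1) i ℓ) 0 * (Δt / Δx) + q))
              + (∑ ℓ, (max (-h (n+1) i ℓ) 0 * (Δt / Δx) + q))) := by rw [hsum, mul_one]
        _ = L * (1 - S * (Δt / Δx) - 2 * d * ν * Δt / Δx ^ 2)
              + (∑ ℓ, L * (max (h (n+1) i ℓ) 0 * (Δt / Δx) + q))
              + (∑ ℓ, L * (max (-h (n+1) i ℓ) 0 * (Δt / Δx) + q)) := by
            rw [mul_add, mul_add, Finset.mul_sum, Finset.mul_sum]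
        _ ≤ _ := add_le_add (add_le_add t1 t2) t3
      have hupp : (1 + a) * Φ n i ≤ B := by
        rw [heqn]
        calc _ ≤ B * (1 - S * (Δt / Δx) - 2 * d * ν * Δt / Δx ^ 2)
              + (∑ ℓ, B * (max (h (n+1) i ℓ) 0 * (Δt / Δx) + q))
              + (∑ ℓ, B * (max (-h (n+1) i ℓ) 0 * (Δt / Δx) + q)) :=
            add_le_add (add_le_add u1 u2) u3
        _ = B * ((1 - S * (Δt / Δx) - 2 * d * ν * Δt / Δx ^ 2)
              + (∑ ℓ, (max (h (n+1) i ℓ) 0 * (Δt / Δx) + q))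
              + (∑ ℓ, (max (-h (n+1) i ℓ) 0 * (Δt / Δx) + q))) := by
            rw [mul_add, mul_add, Finset.mul_sum, Finset.mul_sum]
        _ = B := by rw [hsum, mul_one]
      have h1a : (0:ℝ) < 1 + a := by linarith
      have hΦpos : 0 < Φ n i := by
        rcases mul_pos_iff.mp (lt_of_lt_of_le hL0 hlow) with ⟨_, hp⟩ | ⟨hp, _⟩
        · exact hp
        · linarith
      have hB0 : 0 < B := Real.exp_pos _
      constructor
      · have hstep : L / (1 + c) ≤ Φ n i := by
          rw [div_le_iff₀ (by linarith)]
          calc L ≤ (1 + a) * Φ n i := hlow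
          _ ≤ (1 + c) * Φ n i :=
              mul_le_mul_of_nonneg_right (by linarith) hΦpos.le
          _ = Φ n i * (1 + c) := mul_comm _ _
        calc A / (1 + c) ^ (k+1) = L / (1 + c) := by rw [hL, pow_succ, ← div_div]
        _ ≤ Φ n i := hstep
      · have h3 : (1 + a) * Φ n i ≤ (1 + a) * B :=
          le_trans hupp (le_mul_of_one_le_left hB0.le (by linarith))
        exact le_of_mul_le_mul_left h3 h1a
  intro n hn i
  obtain ⟨hl, hu⟩ := key (Nt - n) n (by omega) i
  refine ⟨le_trans ?_ hl, hu⟩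
  rw [le_div_iff₀ (by positivity)]
  have h1 : (1 + c) ^ (Nt - n) ≤ Real.exp ((Nt : ℝ) * c) := by
    calc (1 + c) ^ (Nt - n) ≤ Real.exp c ^ (Nt - n) :=
          pow_le_pow_left₀ (by linarith) (by linarith [Real.add_one_le_exp c]) _
    _ = Real.exp (((Nt - n : ℕ) : ℝ) * c) := by rw [← Real.exp_nat_mul]
    _ ≤ Real.exp ((Nt : ℝ) * c) := by
        apply Real.exp_le_exp.mpr
        have hle : ((Nt - n : ℕ) : ℝ) ≤ (Nt : ℝ) := by exact_mod_cast Nat.sub_le Nt n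
        exact mul_le_mul_of_nonneg_right hle hc0
  calc Real.exp (-(M + (Nt : ℝ) * Δt * C₀) / (2 * ν)) * (1 + c) ^ (Nt - n)
      ≤ Real.exp (-(M + (Nt : ℝ) * Δt * C₀) / (2 * ν)) * Real.exp ((Nt : ℝ) * c) :=
        mul_le_mul_of_nonneg_left h1 (Real.exp_pos _).le
  _ = A := by
      rw [hA, ← Real.exp_add]
      congr 1
      rw [hc]
      field_simp
      ring
end

section
/- Stability estimate for the backward Euler upwind scheme with residual (core of the consistency-error argument in Proposition 5.1). Let h : {1,…,N_t}×𝔾 → ℝ^d, let Γ : {1,…,N_t}×𝔾 → ℝ satisfy Γ_{n,i} ≥ 0, assume the CFL condition Σ_{ℓ=1}^d |h^ℓ_{n,i}|·(Δt/Δx) + 2dν·Δt/(Δx)² ≤ 1 for all (n,i), and let R ≥ 0. Let e : {0,…,N_t}×𝔾 → ℝ satisfy e_{N_t,i} = 0 for all i, and for every n = 1,…,N_t and i ∈ 𝔾, (1 + (Δt/(2ν))Γ_{n,i})e_{n−1,i} = (1 − Σ_ℓ|h^ℓ_{n,i}|·Δt/Δx − 2dν·Δt/(Δx)²)e_{n,i}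 + Σ_ℓ (h^{ℓ,+}_{n,i}·Δt/Δx + ν·Δt/(Δx)²)e_{n,i[ℓ+]} + Σ_ℓ (h^{ℓ,−}_{n,i}·Δt/Δx + ν·Δt/(Δx)²)e_{n,i[ℓ−]} − r_{n,i}Δt, where |r_{n,i}| ≤ R for all (n,i). Then max_{i∈𝔾} |e_{n,i}| ≤ (N_t − n)·R·Δt for every n ∈ {0,…,N_t}; in particular, max_{n,i} |e_{n,i}| ≤ TR, where T = N_tΔt. -/
/-!
The scheme is monotone: under the CFL condition every coefficient on the right-hand side is
nonnegative, and they sum to one, so the right-hand side is a convex combination of values of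
`e n` minus the residual `r n i * Δt`. The damping factor `1 + Δt / (2ν) · Γ` is at least one, so
one backward step raises the sup norm of `e` by at most `R · Δt`; from `e N_t = 0` this
accumulates to `(N_t − n) · R · Δt`.
-/

open Finset

lemma abs_sum_mul_le_sum_mul {ι : Type*} (s : Finset ι) {w x : ι → ℝ} {B : ℝ}
    (hw : ∀ j ∈ s, 0 ≤ w j) (hx : ∀ j ∈ s, |x j| ≤ B) :
    |∑ j ∈ s, w j * x j| ≤ (∑ j ∈ s, w j) * B := by
  refine (abs_sum_le_sum_abs _ _).trans ?_
  rw [sum_mul]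
  refine sum_le_sum fun j hj => ?_
  rw [abs_mul, abs_of_nonneg (hw j hj)]
  exact mul_le_mul_of_nonneg_left (hx j hj) (hw j hj)

lemma sum_upwind_weights {ι : Type*} [Fintype ι] (v : ι → ℝ) (c μ : ℝ) :
    ∑ ℓ, (max (v ℓ) 0 * c + μ) + ∑ ℓ, (max (-v ℓ) 0 * c + μ) =
      (∑ ℓ, |v ℓ|) * c + 2 * Fintype.card ι * μ := by
  have hpart : ∀ ℓ, (max (v ℓ) 0 * c + μ) + (max (-v ℓ) 0 * c + μ) = |v ℓ| * c + 2 * μ := by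
    intro ℓ
    rw [← posPart_add_negPart (v ℓ), posPart_def, negPart_def]
    ring
  rw [← sum_add_distrib, sum_congr rfl fun ℓ _ => hpart ℓ, sum_add_distrib, ← sum_mul,
    sum_const, card_univ, nsmul_eq_mul]
  ring

/-- `D` is kept apart from `2 * card ι * μ` so that the scheme's `2 * d * ν * Δt / Δx ^ 2`
matches it syntactically. -/
lemma abs_le_add_of_upwind_step {ι : Type*} [Fintype ι] {v xp xm : ι → ℝ}
    {c μ D a B S y x₀ ρ : ℝ} (hc : 0 ≤ c) (hμ : 0 ≤ μ) (hD : D = 2 * Fintype.card ι * μ)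
    (ha : 0 ≤ a) (hCFL : (∑ ℓ, |v ℓ|) * c + D ≤ 1)
    (hx₀ : |x₀| ≤ B) (hxp : ∀ ℓ, |xp ℓ| ≤ B) (hxm : ∀ ℓ, |xm ℓ| ≤ B) (hρ : |ρ| ≤ S)
    (heq : (1 + a) * y = (1 - (∑ ℓ, |v ℓ|) * c - D) * x₀
        + ∑ ℓ, (max (v ℓ) 0 * c + μ) * xp ℓ + ∑ ℓ, (max (-v ℓ) 0 * c + μ) * xm ℓ - ρ) :
    |y| ≤ B + S := by
  have hc₀ : 0 ≤ 1 - (∑ ℓ, |v ℓ|) * c - D := by linarith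
  have hup := abs_sum_mul_le_sum_mul univ (w := fun ℓ => max (v ℓ) 0 * c + μ) (x := xp)
    (fun ℓ _ => by positivity) (fun ℓ _ => hxp ℓ)
  have hdown := abs_sum_mul_le_sum_mul univ (w := fun ℓ => max (-v ℓ) 0 * c + μ) (x := xm)
    (fun ℓ _ => by positivity) (fun ℓ _ => hxm ℓ)
  have hcenter : |(1 - (∑ ℓ, |v ℓ|) * c - D) * x₀| ≤ (1 - (∑ ℓ, |v ℓ|) * c - D) * B := by
    rw [abs_mul, abs_of_nonneg hc₀]
    exact mul_le_mul_of_nonneg_left hx₀ hc₀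
  have hdamp : |y| ≤ |(1 + a) * y| := by
    rw [abs_mul, abs_of_nonneg (by linarith : (0 : ℝ) ≤ 1 + a)]
    exact le_mul_of_one_le_left (abs_nonneg y) (by linarith)
  have hweights := sum_upwind_weights v c μ
  calc |y| ≤ |(1 + a) * y| := hdamp
    _ ≤ |(1 - (∑ ℓ, |v ℓ|) * c - D) * x₀| + |∑ ℓ, (max (v ℓ) 0 * c + μ) * xp ℓ|
        + |∑ ℓ, (max (-v ℓ) 0 * c + μ) * xm ℓ| + |ρ| := by
      rw [heq]
      refine (abs_sub _ _).trans (add_le_add_left ((abs_add_le _ _).trans ?_) _)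
      exact add_le_add_left (abs_add_le _ _) _
    _ ≤ B + S := by subst hD; linear_combination hcenter + hup + hdown + hρ + B * hweights

lemma abs_le_of_backward_step {α : Type*} {N : ℕ} {S : ℝ} {e : ℕ → α → ℝ}
    (hterm : ∀ i, e N i = 0)
    (hstep : ∀ n < N, ∀ B, (∀ j, |e (n + 1) j| ≤ B) → ∀ i, |e n i| ≤ B + S) :
    ∀ n ≤ N, ∀ i, |e n i| ≤ ((N : ℝ) - n) * S := by
  intro n hn
  induction hn using Nat.decreasingInduction with
  | self => simp [hterm]
  | of_succ k hk ih =>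
    intro i
    calc |e k i| ≤ ((N : ℝ) - ↑(k + 1)) * S + S := hstep k hk _ ih i
      _ = ((N : ℝ) - k) * S := by push_cast; ring

theorem backward_euler_upwind_stability_general
    (d Nx Nt : ℕ)
    (Δt Δx ν : ℝ) (hΔt : 0 < Δt) (hΔx : 0 < Δx) (hν : 0 < ν)
    (R : ℝ) (hR : 0 ≤ R)
    (h : ℕ → (Fin d → ZMod Nx) → Fin d → ℝ)
    (Γ : ℕ → (Fin d → ZMod Nx) → ℝ)
    (hΓ : ∀ n, 1 ≤ n → n ≤ Nt → ∀ i, 0 ≤ Γ n i)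
    (hCFL : ∀ n, 1 ≤ n → n ≤ Nt → ∀ i,
      (∑ ℓ, |h n i ℓ|) * (Δt / Δx) + 2 * d * ν * Δt / Δx ^ 2 ≤ 1)
    (r : ℕ → (Fin d → ZMod Nx) → ℝ)
    (hr : ∀ n, 1 ≤ n → n ≤ Nt → ∀ i, |r n i| ≤ R)
    (e : ℕ → (Fin d → ZMod Nx) → ℝ)
    (hterm : ∀ i, e Nt i = 0)
    (heq : ∀ n, 1 ≤ n → n ≤ Nt → ∀ i,
      (1 + Δt / (2 * ν) * Γ n i) * e (n - 1) i =
        (1 - (∑ ℓ, |h n i ℓ|) * (Δt / Δx) - 2 * d * ν * Δt / Δx ^ 2) * e n i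
        + ∑ ℓ, (max (h n i ℓ) 0 * (Δt / Δx) + ν * Δt / Δx ^ 2) * e n (shiftIdx i ℓ 1)
        + ∑ ℓ, (max (-h n i ℓ) 0 * (Δt / Δx) + ν * Δt / Δx ^ 2) * e n (shiftIdx i ℓ (-1))
        - r n i * Δt) :
    (∀ n, n ≤ Nt → ∀ i, |e n i| ≤ ((Nt : ℝ) - (n : ℝ)) * R * Δt) ∧
    (∀ n, n ≤ Nt → ∀ i, |e n i| ≤ ((Nt : ℝ) * Δt) * R) := by
  have hstep : ∀ n < Nt, ∀ B, (∀ j, |e (n + 1) j| ≤ B) → ∀ i, |e n i| ≤ B + R * Δt := by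
    intro n hn B hB i
    have hn₁ : 1 ≤ n + 1 := n.succ_pos
    refine abs_le_add_of_upwind_step (by positivity) (by positivity)
      (by rw [Fintype.card_fin]; ring) (mul_nonneg (by positivity) (hΓ _ hn₁ hn i))
      (hCFL _ hn₁ hn i) (hB i) (fun _ => hB _) (fun _ => hB _) ?_ (heq _ hn₁ hn i)
    rw [abs_mul, abs_of_pos hΔt]
    exact mul_le_mul_of_nonneg_right (hr _ hn₁ hn i) hΔt.le
  have hbound := abs_le_of_backward_step hterm hstep
  refine ⟨fun n hn i => (hbound n hn i).trans_eq (by ring), fun n hn i => (hbound n hn i).trans ?_⟩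
  nlinarith [(n.cast_nonneg : (0 : ℝ) ≤ n), mul_nonneg hR hΔt.le]

/-- Stability estimate for the backward Euler upwind scheme with residual
(core of the consistency-error argument in Proposition 5.1):
`max_i |e_{n,i}| ≤ (N_t − n)·R·Δt` and in particular `max_{n,i} |e_{n,i}| ≤ T·R`. -/
theorem backward_euler_upwind_stability
    (d Nx Nt : ℕ) (hd : 0 < d) (hNx : 0 < Nx) (hNt : 0 < Nt)
    (Δt Δx ν : ℝ) (hΔt : 0 < Δt) (hΔx : 0 < Δx) (hν : 0 < ν)
    (R : ℝ) (hR : 0 ≤ R)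
    (h : ℕ → (Fin d → ZMod Nx) → Fin d → ℝ)
    (Γ : ℕ → (Fin d → ZMod Nx) → ℝ)
    (hΓ : ∀ n, 1 ≤ n → n ≤ Nt → ∀ i, 0 ≤ Γ n i)
    (hCFL : ∀ n, 1 ≤ n → n ≤ Nt → ∀ i,
      (∑ ℓ, |h n i ℓ|) * (Δt / Δx) + 2 * d * ν * Δt / Δx ^ 2 ≤ 1)
    (r : ℕ → (Fin d → ZMod Nx) → ℝ)
    (hr : ∀ n, 1 ≤ n → n ≤ Nt → ∀ i, |r n i| ≤ R)
    (e : ℕ → (Fin d → ZMod Nx) → ℝ)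
    (hterm : ∀ i, e Nt i = 0)
    (heq : ∀ n, 1 ≤ n → n ≤ Nt → ∀ i,
      (1 + Δt / (2 * ν) * Γ n i) * e (n - 1) i =
        (1 - (∑ ℓ, |h n i ℓ|) * (Δt / Δx) - 2 * d * ν * Δt / Δx ^ 2) * e n i
        + ∑ ℓ, (max (h n i ℓ) 0 * (Δt / Δx) + ν * Δt / Δx ^ 2) * e n (shiftIdx i ℓ 1)
        + ∑ ℓ, (max (-h n i ℓ) 0 * (Δt / Δx) + ν * Δt / Δx ^ 2) * e n (shiftIdx i ℓ (-1))
        - r n i * Δt) :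
    (∀ n, n ≤ Nt → ∀ i, |e n i| ≤ ((Nt : ℝ) - (n : ℝ)) * R * Δt) ∧
    (∀ n, n ≤ Nt → ∀ i, |e n i| ≤ ((Nt : ℝ) * Δt) * R) :=
  backward_euler_upwind_stability_general d Nx Nt Δt Δx ν hΔt hΔx hν R hR h Γ hΓ hCFL r hr e hterm
    heq
end

section
/- Growth of the accumulated error amplification factor: polynomial upper bound and logarithmic lower bound (Proposition 5.2 / Theorem 3.2, growth of C^{(1)}(k)). Let k₁, k₂ be real numbers with 1 ≤ k₂ ≤ k₁, set δ_j = k₂/(j+k₁) for j = 0, 1, 2, …, let C̄₂ ≥ 1 and set s = k₂(C̄₂ − 1) ≥ 0. Define S_k = Σ_{ℓ=0}^{k−1} δ_ℓ · Π_{ℓ'=ℓ+1}^{k−1} [(1−δ_{ℓ'}) + δ_{ℓ'}C̄₂] (empty sum 0, empty product 1). Then for every natural number k: k₂ · log((k+k₁)/k₁) ≤ S_k ≤ k₂ · (1 + log(k+k₁)) · e^{s} · (k+k₁)^{s}. In particular S_k is bounded above by a polynomial in k and below by a logarithmic function of k. -/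
open Finset

private lemma aux_log_ge (a b : ℝ) (ha : 0 < a) (hb : 0 < b) :
    (b - a) / b ≤ Real.log b - Real.log a := by
  have h := Real.log_le_sub_one_of_pos (div_pos ha hb)
  rw [Real.log_div ha.ne' hb.ne'] at h
  have e : (b - a) / b = 1 - a / b := by
    rw [sub_div, div_self hb.ne']
  linarith

private lemma aux_log_le (a b : ℝ) (ha : 0 < a) (hb : 0 < b) :
    Real.log b - Real.log a ≤ (b - a) / a := by
  have h := Real.log_le_sub_one_of_pos (div_pos hb ha)
  rw [Real.log_div hb.ne' ha.ne'] at h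
  have e : (b - a) / a = b / a - 1 := by
    rw [sub_div, div_self ha.ne']
  linarith

private lemma harm_lb (k₁ : ℝ) (hk₁ : 0 < k₁) (k : ℕ) :
    Real.log ((k : ℝ) + k₁) - Real.log k₁ ≤ ∑ ℓ ∈ range k, 1 / ((ℓ : ℝ) + k₁) := by
  induction k with
  | zero => simp
  | succ n ih =>
    rw [Finset.sum_range_succ]
    have hpos : 0 < (n : ℝ) + k₁ := by positivity
    have hpos' : 0 < (n : ℝ) + 1 + k₁ := by positivity
    have h := aux_log_le ((n : ℝ) + k₁) ((n : ℝ) + 1 + k₁) hpos hpos'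
    have e : ((n : ℝ) + 1 + k₁) - ((n : ℝ) + k₁) = 1 := by ring
    rw [e] at h
    push_cast
    linarith

private lemma harm_ub' (k₁ : ℝ) (hk₁ : 0 < k₁) (k : ℕ) :
    ∑ ℓ ∈ range (k + 1), 1 / ((ℓ : ℝ) + k₁) ≤
      1 / k₁ + Real.log ((k : ℝ) + k₁) - Real.log k₁ := by
  induction k with
  | zero => simp
  | succ n ih =>
    rw [Finset.sum_range_succ]
    have hpos : 0 < (n : ℝ) + k₁ := by positivity
    have hpos' : 0 < (n : ℝ) + 1 + k₁ := by positivity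
    have h := aux_log_ge ((n : ℝ) + k₁) ((n : ℝ) + 1 + k₁) hpos hpos'
    have e : ((n : ℝ) + 1 + k₁) - ((n : ℝ) + k₁) = 1 := by ring
    rw [e] at h
    push_cast
    push_cast at ih
    linarith

private lemma harm_ub (k₁ : ℝ) (hk₁ : 0 < k₁) (k : ℕ) :
    ∑ ℓ ∈ range k, 1 / ((ℓ : ℝ) + k₁) ≤
      1 / k₁ + Real.log ((k : ℝ) + k₁) - Real.log k₁ := by
  cases k with
  | zero =>
    simp
    positivity
  | succ n =>
    have h := harm_ub' k₁ hk₁ n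
    have hmono : Real.log ((n : ℝ) + k₁) ≤ Real.log ((n : ℝ) + 1 + k₁) :=
      Real.log_le_log (by positivity) (by linarith)
    push_cast
    push_cast at h
    linarith

/-- Growth of the accumulated error amplification factor
`S_k = Σ_{ℓ=0}^{k−1} δ_ℓ · Π_{ℓ'=ℓ+1}^{k−1} [(1−δ_{ℓ'}) + δ_{ℓ'}C̄₂]` with
`δ_j = k₂/(j+k₁)` and `s = k₂(C̄₂−1)`: polynomial upper bound and logarithmic
lower bound (Proposition 5.2 / Theorem 3.2, growth of `C⁽¹⁾(k)`). -/
theorem amplification_factor_growth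
    (k₁ k₂ C2 s : ℝ) (h1 : 1 ≤ k₂) (h2 : k₂ ≤ k₁) (hC2 : 1 ≤ C2)
    (hs : s = k₂ * (C2 - 1)) (k : ℕ) :
    k₂ * Real.log ((k + k₁) / k₁) ≤
      (∑ ℓ ∈ Finset.range k, (k₂ / (ℓ + k₁)) *
        ∏ ℓ' ∈ Finset.Ico (ℓ + 1) k, ((1 - k₂ / (ℓ' + k₁)) + (k₂ / (ℓ' + k₁)) * C2)) ∧
    (∑ ℓ ∈ Finset.range k, (k₂ / (ℓ + k₁)) *
        ∏ ℓ' ∈ Finset.Ico (ℓ + 1) k, ((1 - k₂ / (ℓ' + k₁)) + (k₂ / (ℓ' + k₁)) * C2)) ≤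
      k₂ * (1 + Real.log (k + k₁)) * Real.exp s * (k + k₁) ^ s := by
  have hk₁ : (1 : ℝ) ≤ k₁ := le_trans h1 h2
  have hk₁pos : (0 : ℝ) < k₁ := by linarith
  have hk₂pos : (0 : ℝ) < k₂ := by linarith
  have hkk₁ : (1 : ℝ) ≤ (k : ℝ) + k₁ := by
    have : (0 : ℝ) ≤ (k : ℝ) := Nat.cast_nonneg k
    linarith
  have hkk₁pos : (0 : ℝ) < (k : ℝ) + k₁ := by linarith
  have hδpos : ∀ ℓ : ℕ, (0 : ℝ) < k₂ / ((ℓ : ℝ) + k₁) := by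
    intro ℓ
    have : (0 : ℝ) < (ℓ : ℝ) + k₁ := by positivity
    positivity
  have hs0 : 0 ≤ s := by
    rw [hs]; exact mul_nonneg (by linarith) (by linarith)
  -- each factor is ≥ 1
  have hfac1 : ∀ ℓ' : ℕ, (1 : ℝ) ≤ (1 - k₂ / ((ℓ' : ℝ) + k₁)) + (k₂ / ((ℓ' : ℝ) + k₁)) * C2 := by
    intro ℓ'
    have hδ := (hδpos ℓ').le
    nlinarith [mul_nonneg hδ (by linarith : (0:ℝ) ≤ C2 - 1)]
  -- each factor is ≤ exp(δ(C2-1))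
  have hfacexp : ∀ ℓ' : ℕ, (1 - k₂ / ((ℓ' : ℝ) + k₁)) + (k₂ / ((ℓ' : ℝ) + k₁)) * C2 ≤
      Real.exp (k₂ / ((ℓ' : ℝ) + k₁) * (C2 - 1)) := by
    intro ℓ'
    have h := Real.add_one_le_exp (k₂ / ((ℓ' : ℝ) + k₁) * (C2 - 1))
    nlinarith
  have hprod1 : ∀ ℓ : ℕ, (1 : ℝ) ≤
      ∏ ℓ' ∈ Finset.Ico (ℓ + 1) k, ((1 - k₂ / ((ℓ' : ℝ) + k₁)) + (k₂ / ((ℓ' : ℝ) + k₁)) * C2) := by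
    intro ℓ
    calc (1:ℝ) = ∏ _ℓ' ∈ Finset.Ico (ℓ + 1) k, (1:ℝ) := by simp
      _ ≤ _ := Finset.prod_le_prod (fun i _ => zero_le_one) (fun i _ => hfac1 i)
  -- rewrite sum of δ's
  have hsum_eq : ∀ m : ℕ, ∑ ℓ ∈ range m, k₂ / ((ℓ : ℝ) + k₁) =
      k₂ * ∑ ℓ ∈ range m, 1 / ((ℓ : ℝ) + k₁) := by
    intro m
    rw [Finset.mul_sum]
    exact Finset.sum_congr rfl fun i _ => by rw [mul_one_div]
  constructor
  · -- lower bound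
    have hlb1 : ∑ ℓ ∈ range k, k₂ / ((ℓ : ℝ) + k₁) ≤
        ∑ ℓ ∈ Finset.range k, (k₂ / ((ℓ : ℝ) + k₁)) *
          ∏ ℓ' ∈ Finset.Ico (ℓ + 1) k, ((1 - k₂ / ((ℓ' : ℝ) + k₁)) + (k₂ / ((ℓ' : ℝ) + k₁)) * C2) := by
      apply Finset.sum_le_sum
      intro i _
      exact le_mul_of_one_le_right (hδpos i).le (hprod1 i)
    have hH := harm_lb k₁ hk₁pos k
    have : k₂ * (Real.log ((k : ℝ) + k₁) - Real.log k₁) ≤ ∑ ℓ ∈ range k, k₂ / ((ℓ : ℝ) + k₁) := by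
      rw [hsum_eq]
      exact mul_le_mul_of_nonneg_left hH hk₂pos.le
    rw [Real.log_div hkk₁pos.ne' hk₁pos.ne']
    linarith
  · -- upper bound
    set B : ℝ := ((k : ℝ) + k₁) ^ s with hB
    have hBpos : 0 < B := Real.rpow_pos_of_pos hkk₁pos s
    have hlogk₁ : 0 ≤ Real.log k₁ := Real.log_nonneg hk₁
    have hlogkk₁ : 0 ≤ Real.log ((k : ℝ) + k₁) := Real.log_nonneg hkk₁
    -- inner sum bound
    have hinner : ∀ ℓ : ℕ, ∑ ℓ' ∈ Finset.Ico (ℓ + 1) k, 1 / ((ℓ' : ℝ) + k₁) ≤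
        Real.log ((k : ℝ) + k₁) := by
      intro ℓ
      by_cases hle : ℓ + 1 ≤ k
      · rw [Finset.sum_Ico_eq_sub _ hle]
        have h1' := harm_ub k₁ hk₁pos k
        have h2' : 1 / k₁ ≤ ∑ ℓ' ∈ range (ℓ + 1), 1 / ((ℓ' : ℝ) + k₁) := by
          have h0 := Finset.single_le_sum (f := fun i : ℕ => 1 / ((i : ℝ) + k₁))
            (fun i _ => by positivity) (Finset.mem_range.mpr (Nat.succ_pos ℓ))
          simpa using h0
        linarith
      · rw [Finset.Ico_eq_empty (by omega)]
        simpa using hlogkk₁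
    -- product bound
    have hprodB : ∀ ℓ : ℕ,
        ∏ ℓ' ∈ Finset.Ico (ℓ + 1) k, ((1 - k₂ / ((ℓ' : ℝ) + k₁)) + (k₂ / ((ℓ' : ℝ) + k₁)) * C2) ≤ B := by
      intro ℓ
      have step1 : ∏ ℓ' ∈ Finset.Ico (ℓ + 1) k, ((1 - k₂ / ((ℓ' : ℝ) + k₁)) + (k₂ / ((ℓ' : ℝ) + k₁)) * C2) ≤
          ∏ ℓ' ∈ Finset.Ico (ℓ + 1) k, Real.exp (k₂ / ((ℓ' : ℝ) + k₁) * (C2 - 1)) := by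
        apply Finset.prod_le_prod
        · intro i _; linarith [hfac1 i]
        · intro i _; exact hfacexp i
      rw [← Real.exp_sum] at step1
      have hsum' : ∑ ℓ' ∈ Finset.Ico (ℓ + 1) k, k₂ / ((ℓ' : ℝ) + k₁) * (C2 - 1) =
          s * ∑ ℓ' ∈ Finset.Ico (ℓ + 1) k, 1 / ((ℓ' : ℝ) + k₁) := by
        rw [Finset.mul_sum, hs]
        exact Finset.sum_congr rfl fun i _ => by rw [mul_one_div]; ring
      have step2 : ∑ ℓ' ∈ Finset.Ico (ℓ + 1) k, k₂ / ((ℓ' : ℝ) + k₁) * (C2 - 1) ≤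
          s * Real.log ((k : ℝ) + k₁) := by
        rw [hsum']
        exact mul_le_mul_of_nonneg_left (hinner ℓ) hs0
      have step3 : Real.exp (s * Real.log ((k : ℝ) + k₁)) = B := by
        rw [hB, Real.rpow_def_of_pos hkk₁pos, mul_comm]
      calc ∏ ℓ' ∈ Finset.Ico (ℓ + 1) k, ((1 - k₂ / ((ℓ' : ℝ) + k₁)) + (k₂ / ((ℓ' : ℝ) + k₁)) * C2)
          ≤ Real.exp (∑ ℓ' ∈ Finset.Ico (ℓ + 1) k, k₂ / ((ℓ' : ℝ) + k₁) * (C2 - 1)) := step1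
        _ ≤ Real.exp (s * Real.log ((k : ℝ) + k₁)) := Real.exp_le_exp.mpr step2
        _ = B := step3
    -- assemble
    have hstep : (∑ ℓ ∈ Finset.range k, (k₂ / ((ℓ : ℝ) + k₁)) *
        ∏ ℓ' ∈ Finset.Ico (ℓ + 1) k, ((1 - k₂ / ((ℓ' : ℝ) + k₁)) + (k₂ / ((ℓ' : ℝ) + k₁)) * C2)) ≤
        (∑ ℓ ∈ Finset.range k, k₂ / ((ℓ : ℝ) + k₁)) * B := by
      rw [Finset.sum_mul]
      apply Finset.sum_le_sum
      intro i _
      exact mul_le_mul_of_nonneg_left (hprodB i) (hδpos i).le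
    have hH := harm_ub k₁ hk₁pos k
    have hsumb : (∑ ℓ ∈ Finset.range k, k₂ / ((ℓ : ℝ) + k₁)) ≤ k₂ * (1 + Real.log ((k : ℝ) + k₁)) := by
      rw [hsum_eq]
      have h1k₁ : 1 / k₁ ≤ 1 := by
        rw [div_le_one hk₁pos]; exact hk₁
      have : ∑ ℓ ∈ range k, 1 / ((ℓ : ℝ) + k₁) ≤ 1 + Real.log ((k : ℝ) + k₁) := by linarith
      exact mul_le_mul_of_nonneg_left this hk₂pos.le
    have hexp1 : (1 : ℝ) ≤ Real.exp s := Real.one_le_exp hs0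
    have h2' : (∑ ℓ ∈ Finset.range k, k₂ / ((ℓ : ℝ) + k₁)) * B ≤
        k₂ * (1 + Real.log ((k : ℝ) + k₁)) * B :=
      mul_le_mul_of_nonneg_right hsumb hBpos.le
    have hX : 0 ≤ k₂ * (1 + Real.log ((k : ℝ) + k₁)) * B := by positivity
    have h3' : k₂ * (1 + Real.log ((k : ℝ) + k₁)) * B ≤
        k₂ * (1 + Real.log ((k : ℝ) + k₁)) * Real.exp s * B := by
      nlinarith
    linarith
end

section
/- Decay of the optimality gap for the GCG iteration with predefined step sizes, one-dimensional case (Proposition 4.2, d = 1, where r = 2 and the exponent 2/(r(r−1)) equals 1). Let C > 0, let k₁, k₂ be real numbers with 1 ≤ k₂ ≤ k₁, and set δ_k = k₂/(k+k₁) for k = 0, 1, 2, …. Let (ε_k)_{k≥0} be a sequence of nonnegative real numbers satisfying ε_{k+1} ≤ (1 − δ_k + Cδ_k²)·ε_k for all k. Then for every k ≥ 0, ε_k ≤ N/(k+k₁)^{k₂}, where N = ε₀ · k₁^{k₂} · exp(C·k₂²·(k₁+1)/k₁²). -/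
/-!
Write `x_k = k + k₁` and `δ_k = k₂ / x_k`. Since `1 + t ≤ exp t` and `(x + 1) ^ k₂ ≤ exp (k₂ / x) x ^ k₂`,
the weighted gap `u_k = ε_k x_k ^ k₂` satisfies `u_{k+1} ≤ exp (C δ_k²) u_k`, hence
`u_k ≤ exp (C ∑_{j<k} δ_j²) u_0`. Comparing with the telescoping sum `∑ (1/(j+a) - 1/(j+1+a))`
bounds `∑_j 1/(j+k₁)²` by `1/k₁² + 1/k₁`.
-/

open Finset Real

lemma le_exp_sum_mul_of_le_exp_mul {u c : ℕ → ℝ} (h : ∀ k, u (k + 1) ≤ exp (c k) * u k) (n : ℕ) :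
    u n ≤ exp (∑ i ∈ range n, c i) * u 0 := by
  induction n with
  | zero => simp
  | succ n ih =>
    calc u (n + 1) ≤ exp (c n) * u n := h n
      _ ≤ exp (c n) * (exp (∑ i ∈ range n, c i) * u 0) := by gcongr
      _ = exp (∑ i ∈ range (n + 1), c i) * u 0 := by
        rw [sum_range_succ, exp_add]; ring

lemma one_add_rpow_le_exp_mul {t p : ℝ} (ht : 0 < 1 + t) (hp : 0 ≤ p) :
    (1 + t) ^ p ≤ exp (p * t) := by
  rw [rpow_def_of_pos ht, mul_comm p]
  gcongr
  linarith [log_le_sub_one_of_pos ht]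

lemma add_one_rpow_le_exp_div_mul_rpow {x p : ℝ} (hx : 0 < x) (hp : 0 ≤ p) :
    (x + 1) ^ p ≤ exp (p / x) * x ^ p := by
  have hx' : 0 < 1 + 1 / x := by positivity
  calc (x + 1) ^ p = (1 + 1 / x) ^ p * x ^ p := by
        rw [← mul_rpow hx'.le hx.le]; congr 1; field_simp
    _ ≤ exp (p * (1 / x)) * x ^ p := by gcongr; exact one_add_rpow_le_exp_mul hx' hp
    _ = exp (p / x) * x ^ p := by rw [mul_one_div]

lemma sum_one_div_add_sq_le {a : ℝ} (ha : 0 < a) (n : ℕ) :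
    ∑ j ∈ range n, 1 / ((j : ℝ) + a) ^ 2 ≤ 1 / a ^ 2 + 1 / a := by
  have hpos (j : ℕ) : 0 < (j : ℝ) + a := by positivity
  have hterm (j : ℕ) : 1 / ((j : ℝ) + 1 + a) ^ 2 ≤ 1 / (j + a) - 1 / (j + 1 + a) := by
    rw [div_sub_div _ _ (hpos j).ne' (by positivity), div_le_div_iff₀ (by positivity) (by positivity)]
    nlinarith [hpos j]
  cases n with
  | zero => simp only [range_zero, sum_empty]; positivity
  | succ n =>
    have htele : ∑ j ∈ range n, 1 / ((j : ℝ) + 1 + a) ^ 2 ≤ 1 / a - 1 / (n + a) := by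
      calc _ ≤ ∑ j ∈ range n, (1 / ((j : ℝ) + a) - 1 / (((j + 1 : ℕ) : ℝ) + a)) := by
            gcongr with j; push_cast; exact hterm j
        _ = 1 / a - 1 / (n + a) := by rw [sum_range_sub']; simp
    rw [sum_range_succ']
    simp only [Nat.cast_add, Nat.cast_one, Nat.cast_zero, zero_add]
    linarith [one_div_pos.2 (hpos n)]

lemma one_sub_add_mul_sq_mul_rpow_le {x p : ℝ} (C : ℝ) (hx : 0 < x) (hp : 0 ≤ p) :
    (1 - p / x + C * (p / x) ^ 2) * (x + 1) ^ p ≤ exp (C * (p / x) ^ 2) * x ^ p :=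
  calc (1 - p / x + C * (p / x) ^ 2) * (x + 1) ^ p
      ≤ exp (-(p / x) + C * (p / x) ^ 2) * (x + 1) ^ p := by
        gcongr; linarith [add_one_le_exp (-(p / x) + C * (p / x) ^ 2)]
    _ ≤ exp (-(p / x) + C * (p / x) ^ 2) * (exp (p / x) * x ^ p) := by
        gcongr; exact add_one_rpow_le_exp_div_mul_rpow hx hp
    _ = exp (C * (p / x) ^ 2) * x ^ p := by
        rw [← mul_assoc, ← exp_add]; ring_nf

lemma mul_add_one_rpow_le_exp_mul {e e' x p : ℝ} (C : ℝ) (hx : 0 < x) (hp : 0 ≤ p) (he : 0 ≤ e)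
    (h : e' ≤ (1 - p / x + C * (p / x) ^ 2) * e) :
    e' * (x + 1) ^ p ≤ exp (C * (p / x) ^ 2) * (e * x ^ p) :=
  calc e' * (x + 1) ^ p ≤ e * ((1 - p / x + C * (p / x) ^ 2) * (x + 1) ^ p) := by
        rw [← mul_assoc, mul_comm e]; gcongr
    _ ≤ e * (exp (C * (p / x) ^ 2) * x ^ p) :=
        mul_le_mul_of_nonneg_left (one_sub_add_mul_sq_mul_rpow_le C hx hp) he
    _ = exp (C * (p / x) ^ 2) * (e * x ^ p) := by ring

lemma sum_div_add_sq_le {a : ℝ} (p : ℝ) (ha : 0 < a) (n : ℕ) :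
    ∑ j ∈ range n, (p / ((j : ℝ) + a)) ^ 2 ≤ p ^ 2 * (a + 1) / a ^ 2 :=
  calc ∑ j ∈ range n, (p / ((j : ℝ) + a)) ^ 2
      = p ^ 2 * ∑ j ∈ range n, 1 / ((j : ℝ) + a) ^ 2 := by
        rw [mul_sum]; congr 1 with j; rw [div_pow, mul_one_div]
    _ ≤ p ^ 2 * (1 / a ^ 2 + 1 / a) := by gcongr; exact sum_one_div_add_sq_le ha n
    _ = p ^ 2 * (a + 1) / a ^ 2 := by field_simp; ring

/-- Decay of the optimality gap for the GCG iteration with predefined step sizes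
`δ_k = k₂/(k+k₁)`, one-dimensional case (Proposition 4.2, `d = 1`):
`ε_k ≤ N/(k+k₁)^{k₂}` with `N = ε₀·k₁^{k₂}·exp(C·k₂²·(k₁+1)/k₁²)`. -/
theorem optimality_gap_decay_dim_one
    (C : ℝ) (hC : 0 < C)
    (k₁ k₂ : ℝ) (h1 : 1 ≤ k₂) (h2 : k₂ ≤ k₁)
    (ε : ℕ → ℝ) (hε : ∀ k, 0 ≤ ε k)
    (hrec : ∀ k : ℕ,
      ε (k + 1) ≤ (1 - k₂ / (k + k₁) + C * (k₂ / (k + k₁)) ^ 2) * ε k) :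
    ∀ k : ℕ,
      ε k ≤ (ε 0 * k₁ ^ k₂ * Real.exp (C * k₂ ^ 2 * (k₁ + 1) / k₁ ^ 2)) / (k + k₁) ^ k₂ := by
  intro k
  have hk₁ : 0 < k₁ := by linarith
  have hx (j : ℕ) : 0 < (j : ℝ) + k₁ := by positivity
  have hweighted (j : ℕ) : ε (j + 1) * (((j + 1 : ℕ) : ℝ) + k₁) ^ k₂
      ≤ exp (C * (k₂ / (j + k₁)) ^ 2) * (ε j * ((j : ℝ) + k₁) ^ k₂) := by
    rw [Nat.cast_succ, add_right_comm]
    exact mul_add_one_rpow_le_exp_mul C (hx j) (by linarith) (hε j) (hrec j)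
  have hsum : ∑ j ∈ range k, C * (k₂ / ((j : ℝ) + k₁)) ^ 2 ≤ C * k₂ ^ 2 * (k₁ + 1) / k₁ ^ 2 := by
    rw [← mul_sum, mul_assoc, mul_div_assoc]
    gcongr
    exact sum_div_add_sq_le k₂ hk₁ k
  rw [le_div_iff₀ (rpow_pos_of_pos (hx k) k₂)]
  calc ε k * ((k : ℝ) + k₁) ^ k₂
      ≤ exp (∑ j ∈ range k, C * (k₂ / ((j : ℝ) + k₁)) ^ 2) * (ε 0 * ((0 : ℕ) + k₁) ^ k₂) :=
        le_exp_sum_mul_of_le_exp_mul (u := fun j ↦ ε j * ((j : ℝ) + k₁) ^ k₂) hweighted k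
    _ ≤ exp (C * k₂ ^ 2 * (k₁ + 1) / k₁ ^ 2) * (ε 0 * k₁ ^ k₂) := by
        rw [Nat.cast_zero, zero_add]; have := hε 0; gcongr
    _ = _ := by ring
end

section
/- Decay of the optimality gap for the GCG iteration with predefined step sizes, higher-dimensional case (Proposition 4.2, d ≥ 2). Let C > 0, let k₁, k₂ be real numbers with 1 ≤ k₂ ≤ k₁, set δ_k = k₂/(k+k₁), let ρ ∈ (0,1), and let s be a real number with 0 < s < k₂ and sρ ≤ 1. Let (ε_k)_{k≥0} be a sequence of nonnegative real numbers satisfying ε_{k+1} ≤ (1 − δ_k)ε_k + Cδ_k²·ε_k^{1−ρ} for all k. Set N = max{ ε₀·k₁^{s}, (C·k₂²/(k₂−s))^{1/ρ} }. Then for every k ≥ 0, ε_k ≤ N/(k+k₁)^{s}. -/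
/-!
Induction on `k`, with `t = k + k₁`. The right-hand side of the recursion is monotone in `ε_k`,
so one may substitute the bound `M = N / t^s`. The choice of `N` gives `N^ρ ≥ C k₂² / (k₂ - s)`,
and with `sρ ≤ 1`, `t ≥ 1` this makes the nonlinear term at most `(k₂ - s)/t · M`; the right-hand
side is then at most `(1 - s/t) M`, and Bernoulli's inequality `1 - s/t ≤ (t / (t + 1))^s`
turns this into `N / (t + 1)^s`.
-/

open Real

-- Bernoulli's inequality `(1 + 1/t)^(-s) ≥ 1 - s/t`, cleared of denominators.
lemma one_sub_div_mul_add_one_rpow_le {s t : ℝ} (hs : 0 ≤ s) (ht : 0 < t) :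
    (1 - s / t) * (t + 1) ^ s ≤ t ^ s := by
  rcases lt_or_ge (1 - s / t) 0 with hneg | hnonneg
  · exact (mul_nonpos_of_nonpos_of_nonneg hneg.le (by positivity)).trans (by positivity)
  have hgrowth : (t + 1) ^ s ≤ t ^ s * exp (s / t) := by
    have hexp : t + 1 ≤ t * exp (1 / t) := by
      have := add_one_le_exp (1 / t)
      calc t + 1 = t * (1 / t + 1) := by field_simp; ring
        _ ≤ t * exp (1 / t) := by gcongr
    calc (t + 1) ^ s ≤ (t * exp (1 / t)) ^ s := by gcongr
      _ = t ^ s * exp (s / t) := by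
        rw [mul_rpow ht.le (exp_pos _).le, ← exp_mul, one_div_mul_eq_div]
  calc (1 - s / t) * (t + 1) ^ s ≤ exp (-(s / t)) * (t ^ s * exp (s / t)) := by
        gcongr
        exact one_sub_le_exp_neg _
    _ = t ^ s := by rw [mul_left_comm, ← exp_add, neg_add_cancel, exp_zero, mul_one]

lemma one_sub_div_mul_div_rpow_le {s t N : ℝ} (hs : 0 ≤ s) (ht : 0 < t) (hN : 0 ≤ N) :
    (1 - s / t) * (N / t ^ s) ≤ N / (t + 1) ^ s := by
  have hts : 0 < t ^ s := by positivity
  have hts1 : 0 < (t + 1) ^ s := by positivity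
  rw [mul_div_assoc', le_div_iff₀ hts1, div_mul_eq_mul_div, div_le_iff₀ hts, mul_right_comm,
    mul_comm N]
  exact mul_le_mul_of_nonneg_right (one_sub_div_mul_add_one_rpow_le hs ht) hN

lemma div_sq_mul_rpow_one_sub_le {a b t M ρ : ℝ} (ht : 0 < t) (hM : 0 < M)
    (h : a ≤ b * t * M ^ ρ) : a / t ^ 2 * M ^ (1 - ρ) ≤ b / t * M := by
  calc a / t ^ 2 * M ^ (1 - ρ) ≤ b * t * M ^ ρ / t ^ 2 * M ^ (1 - ρ) := by gcongr
    _ = b / t * (M ^ ρ * M ^ (1 - ρ)) := by field_simp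
    _ = b / t * M := by rw [← rpow_add hM, add_sub_cancel, rpow_one]

lemma rpow_le_mul_div_rpow_rpow {s t N ρ : ℝ} (ht : 1 ≤ t) (hsρ : s * ρ ≤ 1) (hN : 0 ≤ N) :
    N ^ ρ ≤ t * (N / t ^ s) ^ ρ := by
  have ht0 : 0 < t := zero_lt_one.trans_le ht
  have hle : t ^ (s * ρ) ≤ t := by
    simpa using rpow_le_rpow_of_exponent_le ht hsρ
  rw [div_rpow hN (by positivity), ← rpow_mul ht0.le, mul_div_assoc', le_div_iff₀ (by positivity),
    mul_comm t]
  exact mul_le_mul_of_nonneg_left hle (by positivity)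

lemma gcg_step_le_div_rpow {C k₂ ρ s N t u : ℝ} (hC : 0 ≤ C) (hρ : ρ ≤ 1) (hs : 0 ≤ s)
    (hsk : s ≤ k₂) (hsρ : s * ρ ≤ 1) (ht : 1 ≤ t) (hk₂t : k₂ ≤ t) (hN : 0 < N)
    (hCN : C * k₂ ^ 2 ≤ (k₂ - s) * N ^ ρ) (hu : 0 ≤ u) (huN : u ≤ N / t ^ s) :
    (1 - k₂ / t) * u + C * (k₂ / t) ^ 2 * u ^ (1 - ρ) ≤ N / (t + 1) ^ s := by
  have ht0 : 0 < t := zero_lt_one.trans_le ht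
  have hδ : 0 ≤ 1 - k₂ / t := sub_nonneg.2 ((div_le_one ht0).2 hk₂t)
  set M := N / t ^ s
  have hM : 0 < M := by positivity
  have hdrift : C * (k₂ / t) ^ 2 * M ^ (1 - ρ) ≤ (k₂ - s) / t * M := by
    rw [div_pow, mul_div_assoc']
    refine div_sq_mul_rpow_one_sub_le ht0 hM ?_
    calc C * k₂ ^ 2 ≤ (k₂ - s) * N ^ ρ := hCN
      _ ≤ (k₂ - s) * (t * M ^ ρ) :=
        mul_le_mul_of_nonneg_left (rpow_le_mul_div_rpow_rpow ht hsρ hN.le) (sub_nonneg.2 hsk)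
      _ = (k₂ - s) * t * M ^ ρ := by ring
  calc (1 - k₂ / t) * u + C * (k₂ / t) ^ 2 * u ^ (1 - ρ)
      ≤ (1 - k₂ / t) * M + C * (k₂ / t) ^ 2 * M ^ (1 - ρ) := by gcongr
    _ ≤ (1 - k₂ / t) * M + (k₂ - s) / t * M := by gcongr
    _ = (1 - s / t) * M := by ring
    _ ≤ N / (t + 1) ^ s := one_sub_div_mul_div_rpow_le hs ht0 hN.le

/-- Decay of the optimality gap for the GCG iteration with predefined step sizes
`δ_k = k₂/(k+k₁)`, higher-dimensional case (Proposition 4.2, `d ≥ 2`):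
if `ε_{k+1} ≤ (1−δ_k)ε_k + Cδ_k²·ε_k^{1−ρ}`, then `ε_k ≤ N/(k+k₁)^s` with
`N = max{ε₀·k₁^s, (C·k₂²/(k₂−s))^{1/ρ}}`. -/
theorem optimality_gap_decay_higher_dim
    (C : ℝ) (hC : 0 < C)
    (k₁ k₂ : ℝ) (h1 : 1 ≤ k₂) (h2 : k₂ ≤ k₁)
    (ρ : ℝ) (hρ : ρ ∈ Set.Ioo (0:ℝ) 1)
    (s : ℝ) (hs0 : 0 < s) (hsk : s < k₂) (hsρ : s * ρ ≤ 1)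
    (ε : ℕ → ℝ) (hε : ∀ k, 0 ≤ ε k)
    (hrec : ∀ k : ℕ,
      ε (k + 1) ≤ (1 - k₂ / (k + k₁)) * ε k + C * (k₂ / (k + k₁)) ^ 2 * ε k ^ (1 - ρ)) :
    ∀ k : ℕ,
      ε k ≤ max (ε 0 * k₁ ^ s) ((C * k₂ ^ 2 / (k₂ - s)) ^ (1 / ρ)) / (k + k₁) ^ s := by
  set N := max (ε 0 * k₁ ^ s) ((C * k₂ ^ 2 / (k₂ - s)) ^ (1 / ρ))
  have hB : 0 < C * k₂ ^ 2 / (k₂ - s) := div_pos (by positivity) (sub_pos.2 hsk)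
  have hN : 0 < N := (rpow_pos_of_pos hB _).trans_le (le_max_right _ _)
  have hCN : C * k₂ ^ 2 ≤ (k₂ - s) * N ^ ρ := by
    rw [← div_le_iff₀' (sub_pos.2 hsk), ← rpow_inv_le_iff_of_pos hB.le hN.le hρ.1, ← one_div]
    exact le_max_right _ _
  intro k
  induction k with
  | zero =>
    rw [Nat.cast_zero, zero_add, le_div_iff₀ (rpow_pos_of_pos (by linarith) s)]
    exact le_max_left _ _
  | succ k ih =>
    have hk : (0 : ℝ) ≤ k := k.cast_nonneg
    rw [Nat.cast_succ, add_right_comm]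
    exact (hrec k).trans <| gcg_step_le_div_rpow hC.le hρ.2.le hs0.le hsk.le hsρ (by linarith)
      (by linarith) hN hCN (hε k) ih
end

section
/- Consistency of the second-order central difference for functions with Hölder continuous second derivative (estimate for the residual r² in Proposition 5.1). Let α ∈ (0,1], L ≥ 0, h > 0 and x ∈ ℝ. Let u : ℝ → ℝ be twice differentiable on the interval [x−h, x+h] with |u''(σ) − u''(τ)| ≤ L|σ−τ|^α for all σ, τ ∈ [x−h, x+h]. Then |u''(x) − (u(x+h) − 2u(x) + u(x−h))/h²| ≤ L·h^α. -/
/-!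
Put `F t = u (x + t) + u (x - t) - 2 u x - t² u'' x`. Then `F 0 = F' 0 = 0` and
`F'' t = u'' (x + t) + u'' (x - t) - 2 u'' x`, which the Hölder condition bounds by `2 L t ^ α`.
Integrating this bound twice (by the fencing theorem for right derivatives) gives
`|F h| ≤ 2 L h ^ (α + 2) / ((α + 1) (α + 2)) ≤ L h ^ (α + 2)`, and `F h / h²` is, up to sign,
the consistency error.
-/

open Set

theorem norm_le_div_mul_rpow_of_norm_deriv_le_mul_rpow {E : Type*} [NormedAddCommGroup E]
    [NormedSpace ℝ E] {f f' : ℝ → E} {b C p : ℝ} (hp : 0 ≤ p) (hf0 : f 0 = 0)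
    (hf : ∀ t ∈ Icc 0 b, HasDerivWithinAt f (f' t) (Icc 0 b) t)
    (bound : ∀ t ∈ Ico 0 b, ‖f' t‖ ≤ C * t ^ p) :
    ∀ t ∈ Icc 0 b, ‖f t‖ ≤ C / (p + 1) * t ^ (p + 1) := by
  have hp1 : p + 1 ≠ 0 := by positivity
  have hB : ∀ t : ℝ, HasDerivAt (fun s => C / (p + 1) * s ^ (p + 1)) (C * t ^ p) t := fun t => by
    refine ((Real.hasDerivAt_rpow_const (p := p + 1) (Or.inr (by linarith))).const_mul
      (C / (p + 1))).congr_deriv ?_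
    rw [add_sub_cancel_right]
    field_simp
  exact fun t ht => image_norm_le_of_norm_deriv_right_le_deriv_boundary
    (HasDerivWithinAt.continuousOn hf)
    (fun s hs => (hf s (Ico_subset_Icc_self hs)).mono_of_mem_nhdsWithin
      (Icc_mem_nhdsGE_of_mem hs))
    (by simp [hf0, Real.zero_rpow hp1]) hB bound ht

section Reflection

variable {u u' : ℝ → ℝ} {x h t : ℝ}

theorem hasDerivWithinAt_comp_const_add_Icc
    (hu : ∀ σ ∈ Icc (x - h) (x + h), HasDerivWithinAt u (u' σ) (Icc (x - h) (x + h)) σ)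
    (ht : t ∈ Icc 0 h) :
    HasDerivWithinAt (fun s => u (x + s)) (u' (x + t)) (Icc 0 h) t := by
  have hmaps : MapsTo (fun s => x + s) (Icc 0 h) (Icc (x - h) (x + h)) :=
    fun s hs => ⟨by linarith [hs.1, hs.2], by linarith [hs.2]⟩
  exact ((hu _ (hmaps ht)).comp t ((hasDerivAt_id t).const_add x).hasDerivWithinAt hmaps).congr_deriv
    (mul_one _)

theorem hasDerivWithinAt_comp_const_sub_Icc
    (hu : ∀ σ ∈ Icc (x - h) (x + h), HasDerivWithinAt u (u' σ) (Icc (x - h) (x + h)) σ)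
    (ht : t ∈ Icc 0 h) :
    HasDerivWithinAt (fun s => u (x - s)) (-u' (x - t)) (Icc 0 h) t := by
  have hmaps : MapsTo (fun s => x - s) (Icc 0 h) (Icc (x - h) (x + h)) :=
    fun s hs => ⟨by linarith [hs.2], by linarith [hs.1, hs.2]⟩
  exact ((hu _ (hmaps ht)).comp t ((hasDerivAt_id t).const_sub x).hasDerivWithinAt hmaps).congr_deriv
    (mul_neg_one _)

theorem hasDerivWithinAt_symm_add_sub_sq (c : ℝ)
    (hu : ∀ σ ∈ Icc (x - h) (x + h), HasDerivWithinAt u (u' σ) (Icc (x - h) (x + h)) σ)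
    (ht : t ∈ Icc 0 h) :
    HasDerivWithinAt (fun s => u (x + s) + u (x - s) - 2 * u x - s ^ 2 * c)
      (u' (x + t) - u' (x - t) - 2 * t * c) (Icc 0 h) t := by
  refine ((((hasDerivWithinAt_comp_const_add_Icc hu ht).add
    (hasDerivWithinAt_comp_const_sub_Icc hu ht)).sub_const (2 * u x)).sub
    ((hasDerivAt_pow 2 t).mul_const c).hasDerivWithinAt).congr_deriv ?_
  push_cast
  ring

theorem hasDerivWithinAt_symm_sub_sub_mul (c : ℝ)
    (hu : ∀ σ ∈ Icc (x - h) (x + h), HasDerivWithinAt u (u' σ) (Icc (x - h) (x + h)) σ)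
    (ht : t ∈ Icc 0 h) :
    HasDerivWithinAt (fun s => u (x + s) - u (x - s) - 2 * s * c)
      (u' (x + t) + u' (x - t) - 2 * c) (Icc 0 h) t := by
  refine (((hasDerivWithinAt_comp_const_add_Icc hu ht).sub
    (hasDerivWithinAt_comp_const_sub_Icc hu ht)).sub
    (((hasDerivAt_id t).const_mul 2).mul_const c).hasDerivWithinAt).congr_deriv ?_
  ring

theorem abs_add_sub_two_mul_le_of_holder {α L : ℝ}
    (hHolder : ∀ σ ∈ Icc (x - h) (x + h), ∀ τ ∈ Icc (x - h) (x + h),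
      |u σ - u τ| ≤ L * |σ - τ| ^ α)
    (ht : t ∈ Icc 0 h) :
    |u (x + t) + u (x - t) - 2 * u x| ≤ 2 * L * t ^ α := by
  have hx : x ∈ Icc (x - h) (x + h) := ⟨by linarith [ht.1, ht.2], by linarith [ht.1, ht.2]⟩
  have hplus := hHolder (x + t) ⟨by linarith [ht.1, ht.2], by linarith [ht.2]⟩ x hx
  have hminus := hHolder (x - t) ⟨by linarith [ht.2], by linarith [ht.1, ht.2]⟩ x hx
  rw [add_sub_cancel_left, abs_of_nonneg ht.1] at hplus
  rw [sub_sub_cancel_left, abs_neg, abs_of_nonneg ht.1] at hminus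
  calc |u (x + t) + u (x - t) - 2 * u x|
      = |(u (x + t) - u x) + (u (x - t) - u x)| := by ring_nf
    _ ≤ |u (x + t) - u x| + |u (x - t) - u x| := abs_add_le _ _
    _ ≤ 2 * L * t ^ α := by linarith

end Reflection

/-- Consistency of the second-order central difference for functions with Hölder
continuous second derivative (estimate for the residual `r²` in Proposition 5.1):
`|u''(x) − (u(x+h) − 2u(x) + u(x−h))/h²| ≤ L·h^α`. -/
theorem central_difference_consistency_holder
    (α L h x : ℝ) (hα : α ∈ Set.Ioc (0:ℝ) 1) (hL : 0 ≤ L) (hh : 0 < h)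
    (u u' u'' : ℝ → ℝ)
    (hd1 : ∀ σ ∈ Set.Icc (x - h) (x + h),
      HasDerivWithinAt u (u' σ) (Set.Icc (x - h) (x + h)) σ)
    (hd2 : ∀ σ ∈ Set.Icc (x - h) (x + h),
      HasDerivWithinAt u' (u'' σ) (Set.Icc (x - h) (x + h)) σ)
    (hHolder : ∀ σ ∈ Set.Icc (x - h) (x + h), ∀ τ ∈ Set.Icc (x - h) (x + h),
      |u'' σ - u'' τ| ≤ L * |σ - τ| ^ α) :
    |u'' x - (u (x + h) - 2 * u x + u (x - h)) / h ^ 2| ≤ L * h ^ α := by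
  have hα0 : 0 ≤ α := hα.1.le
  have hfirst : ∀ t ∈ Icc 0 h,
      ‖u' (x + t) - u' (x - t) - 2 * t * u'' x‖ ≤ 2 * L / (α + 1) * t ^ (α + 1) :=
    norm_le_div_mul_rpow_of_norm_deriv_le_mul_rpow hα0 (by simp)
      (fun t ht => hasDerivWithinAt_symm_sub_sub_mul (u'' x) hd2 ht)
      (fun t ht => abs_add_sub_two_mul_le_of_holder hHolder (Ico_subset_Icc_self ht))
  have hsecond : |u (x + h) + u (x - h) - 2 * u x - h ^ 2 * u'' x|
      ≤ 2 * L / (α + 1) / (α + 1 + 1) * h ^ (α + 1 + 1) :=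
    norm_le_div_mul_rpow_of_norm_deriv_le_mul_rpow (by positivity) (by simp; ring)
      (fun t ht => hasDerivWithinAt_symm_add_sub_sq (u'' x) hd1 ht)
      (fun t ht => hfirst t (Ico_subset_Icc_self ht)) h (right_mem_Icc.2 hh.le)
  have hconst : 2 * L / (α + 1) / (α + 1 + 1) ≤ L := by
    rw [div_div, div_le_iff₀ (by positivity)]
    nlinarith [mul_nonneg hL hα0, mul_nonneg hL (mul_nonneg hα0 hα0)]
  have hpow : h ^ (α + 1 + 1) = h ^ α * h ^ 2 := by
    rw [add_assoc, one_add_one_eq_two]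
    exact_mod_cast Real.rpow_add_natCast hh.ne' α 2
  rw [show u'' x - (u (x + h) - 2 * u x + u (x - h)) / h ^ 2
      = -(u (x + h) + u (x - h) - 2 * u x - h ^ 2 * u'' x) / h ^ 2 by field_simp; ring,
    abs_div, abs_neg, abs_of_pos (pow_pos hh 2), div_le_iff₀ (pow_pos hh 2), mul_assoc, ← hpow]
  exact hsecond.trans (by gcongr)
end

section
/- The product of the Cole–Hopf variables solves the Fokker–Planck equation. Let ν > 0 and let d be a positive integer. Let φ, ψ, γ : ℝ × ℝ^d → ℝ and h : ℝ × ℝ^d → ℝ^d, and suppose that at a point (t,x): φ(·,x) and ψ(·,x) are differentiable at t; φ(t,·), ψ(t,·) are twice differentiable in a neighborhood of x with gradients differentiable at x; h(t,·) is differentiable at x; φ > 0 in a neighborhood of (t,x); and the two equations ∂_t φ + νΔφ + h·∇φ = (γ/(2ν))·φ and ∂_t ψ − νΔψ + div(hψ) = −(γ/(2ν))·ψ hold at (t,x), where Δ, ∇, div denote the spatial Laplacian, gradient and divergence. Define m = φψ and u = −2ν log φ. Then ∂_t m(t,x) − νΔm(t,x) − div( m·(∇u − h) )(t,x) = 0;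 that is, m solves the Fokker–Planck equation ∂_t m − νΔm − div(m·∇_pH(t,x,∇u)) = 0 for the Hamiltonian H(t,x,p) = |p|²/2 − h(t,x)·p, for which ∇_pH(t,x,p) = p − h(t,x). -/
/-!
Along each coordinate line the flux `m (∇u − h)` equals `−2ν ∂φ ψ − φ ψ h` wherever `φ ≠ 0`,
so the quotient by `φ` disappears and the flux is differentiated by the product rule alone.
Then `∂_t m − νΔm − div(m(∇u − h))` is `ψ` times the φ-equation plus `φ` times the ψ-equation:
the mixed terms `∇φ·∇ψ` of `νΔm` cancel against those of the flux, and the potential terms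
`±γφψ/(2ν)` cancel each other.
-/

open Finset Filter Topology

theorem tendsto_update_nhds {ι : Type*} [DecidableEq ι] {A : ι → Type*}
    [∀ i, TopologicalSpace (A i)] (x : ∀ i, A i) (i : ι) :
    Tendsto (Function.update x i) (𝓝 (x i)) (𝓝 x) := by
  have h := (tendsto_const_nhds (x := x)).update i (tendsto_id (x := 𝓝 (x i)))
  rwa [Function.update_eq_self] at h

theorem Filter.Eventually.hasDerivAt_coleHopf_flux {f g f' k : ℝ → ℝ} {a f'' g' k' c : ℝ}
    (hf0 : ∀ᶠ r in 𝓝 a, f r ≠ 0) (hf : HasDerivAt f (f' a) a) (hf' : HasDerivAt f' f'' a)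
    (hg : HasDerivAt g g' a) (hk : HasDerivAt k k' a) :
    HasDerivAt (fun r => f r * g r * (-c * f' r / f r - k r))
      (-c * (f'' * g a + f' a * g') - (f' a * g a * k a + f a * g' * k a + f a * g a * k')) a := by
  have hexpanded : HasDerivAt (fun r => -c * (f' r * g r) - f r * g r * k r)
      (-c * (f'' * g a + f' a * g') - (f' a * g a * k a + f a * g' * k a + f a * g a * k')) a :=
    (((hf'.mul hg).const_mul (-c)).sub ((hf.mul hg).mul hk)).congr_deriv
      (by rw [Pi.mul_apply]; ring)
  refine hexpanded.congr_of_eventuallyEq ?_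
  filter_upwards [hf0] with r hr
  field_simp

theorem coleHopf_product_residual {ι : Type*} (s : Finset ι) {ν κ φ ψ φt ψt : ℝ}
    {h φx ψx φxx ψxx hdiag : ι → ℝ}
    (hφeq : φt + ν * ∑ ℓ ∈ s, φxx ℓ + ∑ ℓ ∈ s, h ℓ * φx ℓ = κ * φ)
    (hψeq : ψt - ν * ∑ ℓ ∈ s, ψxx ℓ + ∑ ℓ ∈ s, (hdiag ℓ * ψ + h ℓ * ψx ℓ) = -κ * ψ) :
    (φt * ψ + φ * ψt) - ν * ∑ ℓ ∈ s, (φxx ℓ * ψ + φx ℓ * ψx ℓ + (φx ℓ * ψx ℓ + φ * ψxx ℓ))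
      - ∑ ℓ ∈ s, (-(2 * ν) * (φxx ℓ * ψ + φx ℓ * ψx ℓ)
        - (φx ℓ * ψ * h ℓ + φ * ψx ℓ * h ℓ + φ * ψ * hdiag ℓ)) = 0 := by
  have hsum : ν * ∑ ℓ ∈ s, (φxx ℓ * ψ + φx ℓ * ψx ℓ + (φx ℓ * ψx ℓ + φ * ψxx ℓ))
      + ∑ ℓ ∈ s, (-(2 * ν) * (φxx ℓ * ψ + φx ℓ * ψx ℓ)
        - (φx ℓ * ψ * h ℓ + φ * ψx ℓ * h ℓ + φ * ψ * hdiag ℓ))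
      = ψ * (-ν * ∑ ℓ ∈ s, φxx ℓ - ∑ ℓ ∈ s, h ℓ * φx ℓ)
        + φ * (ν * ∑ ℓ ∈ s, ψxx ℓ - ∑ ℓ ∈ s, (hdiag ℓ * ψ + h ℓ * ψx ℓ)) := by
    simp only [mul_sum, ← sum_add_distrib, ← sum_sub_distrib, mul_sub, neg_mul]
    exact sum_congr rfl fun ℓ _ => by ring
  linear_combination ψ * hφeq + φ * hψeq - hsum

theorem cole_hopf_product_solves_fokker_planck_general
    (ν : ℝ) (d : ℕ)
    (φ ψ γ : ℝ → (Fin d → ℝ) → ℝ) (h : ℝ → (Fin d → ℝ) → Fin d → ℝ)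
    (t : ℝ) (x : Fin d → ℝ)
    (U : Set (Fin d → ℝ)) (hU : U ∈ nhds x)
    (φt ψt : ℝ) (φx ψx : Fin d → (Fin d → ℝ) → ℝ) (φxx ψxx hdiag : Fin d → ℝ)
    -- φ(·,x), ψ(·,x) are differentiable at t
    (hφt : HasDerivAt (fun s => φ s x) φt t)
    (hψt : HasDerivAt (fun s => ψ s x) ψt t)
    -- spatial partial derivatives of φ(t,·), ψ(t,·) exist on a neighborhood of x
    (hφx : ∀ y ∈ U, ∀ ℓ, HasDerivAt (fun r => φ t (Function.update y ℓ r)) (φx ℓ y) (y ℓ))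
    (hψx : ∀ y ∈ U, ∀ ℓ, HasDerivAt (fun r => ψ t (Function.update y ℓ r)) (ψx ℓ y) (y ℓ))
    -- (diagonal) second spatial partial derivatives of φ(t,·), ψ(t,·) exist at x
    (hφxx : ∀ ℓ, HasDerivAt (fun r => φx ℓ (Function.update x ℓ r)) (φxx ℓ) (x ℓ))
    (hψxx : ∀ ℓ, HasDerivAt (fun r => ψx ℓ (Function.update x ℓ r)) (ψxx ℓ) (x ℓ))
    -- h(t,·) is differentiable at x (diagonal partial derivatives)
    (hhx : ∀ ℓ, HasDerivAt (fun r => h t (Function.update x ℓ r) ℓ) (hdiag ℓ) (x ℓ))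
    -- φ is positive near x
    (hφpos : ∀ y ∈ U, 0 < φ t y)
    -- ∂_t φ + νΔφ + h·∇φ = (γ/(2ν))·φ at (t,x)
    (hφeq : φt + ν * (∑ ℓ, φxx ℓ) + (∑ ℓ, h t x ℓ * φx ℓ x)
      = γ t x / (2 * ν) * φ t x)
    -- ∂_t ψ − νΔψ + div(hψ) = −(γ/(2ν))·ψ at (t,x)
    (hψeq : ψt - ν * (∑ ℓ, ψxx ℓ) + (∑ ℓ, (hdiag ℓ * ψ t x + h t x ℓ * ψx ℓ x))
      = -(γ t x / (2 * ν)) * ψ t x) :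
    ∃ (mt : ℝ) (mx : Fin d → (Fin d → ℝ) → ℝ) (mxx wdiag : Fin d → ℝ),
      -- ∂_t m exists at (t,x)
      HasDerivAt (fun s => φ s x * ψ s x) mt t ∧
      -- spatial partial derivatives of m = φψ exist near x
      (∀ y ∈ U, ∀ ℓ, HasDerivAt
        (fun r => φ t (Function.update y ℓ r) * ψ t (Function.update y ℓ r))
        (mx ℓ y) (y ℓ)) ∧
      -- diagonal second spatial partial derivatives of m exist at x
      (∀ ℓ, HasDerivAt (fun r => mx ℓ (Function.update x ℓ r)) (mxx ℓ) (x ℓ)) ∧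
      -- the divergence of w = m·(∇u − h), with ∇u = −2ν∇φ/φ, exists at x
      (∀ ℓ, HasDerivAt
        (fun r =>
          φ t (Function.update x ℓ r) * ψ t (Function.update x ℓ r) *
            (-(2 * ν) * φx ℓ (Function.update x ℓ r) / φ t (Function.update x ℓ r)
              - h t (Function.update x ℓ r) ℓ))
        (wdiag ℓ) (x ℓ)) ∧
      -- the Fokker–Planck equation ∂_t m − νΔm − div(m(∇u − h)) = 0 at (t,x)
      mt - ν * (∑ ℓ, mxx ℓ) - (∑ ℓ, wdiag ℓ) = 0 := by
  have hxU : x ∈ U := mem_of_mem_nhds hU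
  have hφx₀ ℓ := hφx x hxU ℓ
  have hψx₀ ℓ := hψx x hxU ℓ
  have hφ_ne ℓ : ∀ᶠ r in 𝓝 (x ℓ), φ t (Function.update x ℓ r) ≠ 0 :=
    (tendsto_update_nhds x ℓ).eventually (eventually_of_mem hU fun y hy => (hφpos y hy).ne')
  refine ⟨φt * ψ t x + φ t x * ψt, fun ℓ y => φx ℓ y * ψ t y + φ t y * ψx ℓ y,
    fun ℓ => φxx ℓ * ψ t x + φx ℓ x * ψx ℓ x + (φx ℓ x * ψx ℓ x + φ t x * ψxx ℓ),
    fun ℓ => -(2 * ν) * (φxx ℓ * ψ t x + φx ℓ x * ψx ℓ x)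
      - (φx ℓ x * ψ t x * h t x ℓ + φ t x * ψx ℓ x * h t x ℓ + φ t x * ψ t x * hdiag ℓ),
    hφt.mul hψt, fun y hy ℓ => ?_, fun ℓ => ?_, fun ℓ => ?_,
    coleHopf_product_residual univ hφeq hψeq⟩
  · simpa only [Function.update_eq_self, Pi.mul_def] using (hφx y hy ℓ).mul (hψx y hy ℓ)
  · simpa only [Function.update_eq_self, Pi.mul_def, Pi.add_def] using
      ((hφxx ℓ).mul (hψx₀ ℓ)).add ((hφx₀ ℓ).mul (hψxx ℓ))
  · simpa only [Function.update_eq_self] using (hφ_ne ℓ).hasDerivAt_coleHopf_flux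
      (by simpa only [Function.update_eq_self] using hφx₀ ℓ) (hφxx ℓ) (hψx₀ ℓ) (hhx ℓ)

/-- The product of the Cole–Hopf variables solves the Fokker–Planck equation.
If `∂_t φ + νΔφ + h·∇φ = (γ/(2ν))φ` and `∂_t ψ − νΔψ + div(hψ) = −(γ/(2ν))ψ` at `(t,x)`,
with `φ > 0` near `x`, then `m = φψ` satisfies
`∂_t m − νΔm − div(m·(∇u − h)) = 0` at `(t,x)`, where `u = −2ν log φ`
(so that `∇u = −2ν ∇φ/φ` and `∇_pH(t,x,∇u) = ∇u − h` for `H(t,x,p) = |p|²/2 − h·p`);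
in particular all derivatives appearing in the equation exist. -/
theorem cole_hopf_product_solves_fokker_planck
    (ν : ℝ) (hν : 0 < ν) (d : ℕ) (hd : 0 < d)
    (φ ψ γ : ℝ → (Fin d → ℝ) → ℝ) (h : ℝ → (Fin d → ℝ) → Fin d → ℝ)
    (t : ℝ) (x : Fin d → ℝ)
    (U : Set (Fin d → ℝ)) (hU : U ∈ nhds x)
    (φt ψt : ℝ) (φx ψx : Fin d → (Fin d → ℝ) → ℝ) (φxx ψxx hdiag : Fin d → ℝ)
    -- φ(·,x), ψ(·,x) are differentiable at t
    (hφt : HasDerivAt (fun s => φ s x) φt t)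
    (hψt : HasDerivAt (fun s => ψ s x) ψt t)
    -- spatial partial derivatives of φ(t,·), ψ(t,·) exist on a neighborhood of x
    (hφx : ∀ y ∈ U, ∀ ℓ, HasDerivAt (fun r => φ t (Function.update y ℓ r)) (φx ℓ y) (y ℓ))
    (hψx : ∀ y ∈ U, ∀ ℓ, HasDerivAt (fun r => ψ t (Function.update y ℓ r)) (ψx ℓ y) (y ℓ))
    -- (diagonal) second spatial partial derivatives of φ(t,·), ψ(t,·) exist at x
    (hφxx : ∀ ℓ, HasDerivAt (fun r => φx ℓ (Function.update x ℓ r)) (φxx ℓ) (x ℓ))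
    (hψxx : ∀ ℓ, HasDerivAt (fun r => ψx ℓ (Function.update x ℓ r)) (ψxx ℓ) (x ℓ))
    -- h(t,·) is differentiable at x (diagonal partial derivatives)
    (hhx : ∀ ℓ, HasDerivAt (fun r => h t (Function.update x ℓ r) ℓ) (hdiag ℓ) (x ℓ))
    -- φ is positive near x
    (hφpos : ∀ y ∈ U, 0 < φ t y)
    -- ∂_t φ + νΔφ + h·∇φ = (γ/(2ν))·φ at (t,x)
    (hφeq : φt + ν * (∑ ℓ, φxx ℓ) + (∑ ℓ, h t x ℓ * φx ℓ x)
      = γ t x / (2 * ν) * φ t x)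
    -- ∂_t ψ − νΔψ + div(hψ) = −(γ/(2ν))·ψ at (t,x)
    (hψeq : ψt - ν * (∑ ℓ, ψxx ℓ) + (∑ ℓ, (hdiag ℓ * ψ t x + h t x ℓ * ψx ℓ x))
      = -(γ t x / (2 * ν)) * ψ t x) :
    ∃ (mt : ℝ) (mx : Fin d → (Fin d → ℝ) → ℝ) (mxx wdiag : Fin d → ℝ),
      -- ∂_t m exists at (t,x)
      HasDerivAt (fun s => φ s x * ψ s x) mt t ∧
      -- spatial partial derivatives of m = φψ exist near x
      (∀ y ∈ U, ∀ ℓ, HasDerivAt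
        (fun r => φ t (Function.update y ℓ r) * ψ t (Function.update y ℓ r))
        (mx ℓ y) (y ℓ)) ∧
      -- diagonal second spatial partial derivatives of m exist at x
      (∀ ℓ, HasDerivAt (fun r => mx ℓ (Function.update x ℓ r)) (mxx ℓ) (x ℓ)) ∧
      -- the divergence of w = m·(∇u − h), with ∇u = −2ν∇φ/φ, exists at x
      (∀ ℓ, HasDerivAt
        (fun r =>
          φ t (Function.update x ℓ r) * ψ t (Function.update x ℓ r) *
            (-(2 * ν) * φx ℓ (Function.update x ℓ r) / φ t (Function.update x ℓ r)
              - h t (Function.update x ℓ r) ℓ))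
        (wdiag ℓ) (x ℓ)) ∧
      -- the Fokker–Planck equation ∂_t m − νΔm − div(m(∇u − h)) = 0 at (t,x)
      mt - ν * (∑ ℓ, mxx ℓ) - (∑ ℓ, wdiag ℓ) = 0 :=
  cole_hopf_product_solves_fokker_planck_general ν d φ ψ γ h t x U hU φt ψt φx ψx φxx ψxx hdiag hφt
    hψt hφx hψx hφxx hψxx hhx hφpos hφeq hψeq
end
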